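/- Let Φ be a point process with σ-finite moment measure M_Φ and Palm kernel {P^x_Φ}. For all measurable f, g : 𝕏 → ℝ≥0 with g integrable with respect to M_Φ, the derivative of the Laplace functional satisfies ∂/∂t L_Φ(f + t g)|_{t=0} = − ∫_𝕏 g(x) L_{Φ_x}(f) M_Φ(dx), where L_{Φ_x}(f) = ∫ exp(−μ(f)) P^x_Φ(dμ). -/

import Mathlib

/-!
With `A = Φ(f)` and `B = Φ(g)`, the Laplace functional at `f + t g` is `E[e^{-A - tB}]`.
Its difference quotients at `t = 0⁺` are dominated by `B`, which is integrable since
`E[B] = ∫ g dM`, so dominated convergence gives the right derivative `-E[B e^{-A}]`.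
The refined Campbell theorem `E[Φ(g) h(Φ)] = ∫ g(x) ∫ h dP^x M(dx)` with `h(μ) = e^{-μ(f)}` turns
this into the Palm side. Since `x ↦ P^x(L)` is not assumed measurable, the right-hand side is a
lower integral and the monotone class argument only gives `≤`; equality follows by applying it
to both `h` and `1 - h`: on the Palm side their sum is at most `∫ g dM` (σ-finiteness of `M`),
which is exactly their sum on the side of `Φ`.
-/

open MeasureTheory ProbabilityTheory ENNReal Set

/-- `negExp a = e^{-a}`, with the convention `e^{-∞} = 0`. -/
noncomputable def negExp (a : ℝ≥0∞) : ℝ≥0∞ :=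
  if a = ∞ then 0 else ENNReal.ofReal (Real.exp (-a.toReal))

open Filter Topology

theorem negExp_top : negExp ∞ = 0 := if_pos rfl

theorem negExp_of_ne_top {a : ℝ≥0∞} (ha : a ≠ ∞) :
    negExp a = ENNReal.ofReal (Real.exp (-a.toReal)) := if_neg ha

theorem negExp_le_one (a : ℝ≥0∞) : negExp a ≤ 1 := by
  unfold negExp
  split
  · exact zero_le_one
  · exact ENNReal.ofReal_le_one.mpr (Real.exp_le_one_iff.mpr (neg_nonpos.mpr toReal_nonneg))

theorem measurable_negExp : Measurable negExp :=
  Measurable.ite (measurableSet_singleton ∞) measurable_const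
    (ENNReal.measurable_ofReal.comp (Real.measurable_exp.comp ENNReal.measurable_toReal.neg))

theorem negExp_add (a b : ℝ≥0∞) : negExp (a + b) = negExp a * negExp b := by
  rcases eq_or_ne a ∞ with rfl | ha
  · simp [negExp_top]
  rcases eq_or_ne b ∞ with rfl | hb
  · simp [negExp_top]
  rw [negExp_of_ne_top (add_ne_top.mpr ⟨ha, hb⟩), negExp_of_ne_top ha, negExp_of_ne_top hb,
    toReal_add ha hb, neg_add, Real.exp_add, ENNReal.ofReal_mul (Real.exp_pos _).le]

theorem toReal_negExp {a : ℝ≥0∞} (ha : a ≠ ∞) : (negExp a).toReal = Real.exp (-a.toReal) := by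
  rw [negExp_of_ne_top ha, toReal_ofReal (Real.exp_pos _).le]

theorem toReal_negExp_le_one (a : ℝ≥0∞) : (negExp a).toReal ≤ 1 :=
  toReal_le_of_le_ofReal zero_le_one (by simpa using negExp_le_one a)

theorem toReal_negExp_add_mul {a b : ℝ≥0∞} (hb : b ≠ ∞) {t : ℝ} (ht : 0 ≤ t) :
    (negExp (a + ENNReal.ofReal t * b)).toReal
      = (negExp a).toReal * Real.exp (-(t * b.toReal)) := by
  rw [negExp_add, toReal_mul, toReal_negExp (mul_ne_top ofReal_ne_top hb), toReal_mul,
    toReal_ofReal ht]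

theorem hasDerivWithinAt_toReal_negExp_add_mul (a : ℝ≥0∞) {b : ℝ≥0∞} (hb : b ≠ ∞) :
    HasDerivWithinAt (fun t : ℝ => (negExp (a + ENNReal.ofReal t * b)).toReal)
      (-(b * negExp a).toReal) (Ici 0) 0 := by
  have h_lin : HasDerivAt (fun t : ℝ => -(t * b.toReal)) (-b.toReal) 0 :=
    (hasDerivAt_mul_const b.toReal).neg
  have h : HasDerivAt (fun t : ℝ => (negExp a).toReal * Real.exp (-(t * b.toReal)))
      (-(b * negExp a).toReal) 0 :=
    (h_lin.exp.const_mul _).congr_deriv (by simp [toReal_mul, mul_comm])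
  exact h.hasDerivWithinAt.congr (fun t ht => toReal_negExp_add_mul hb ht)
    (toReal_negExp_add_mul hb le_rfl)

theorem abs_slope_toReal_negExp_add_mul_le (a : ℝ≥0∞) {b : ℝ≥0∞} (hb : b ≠ ∞) {t : ℝ}
    (ht : 0 < t) :
    |slope (fun t : ℝ => (negExp (a + ENNReal.ofReal t * b)).toReal) 0 t| ≤ b.toReal := by
  have hc₀ : 0 ≤ (negExp a).toReal := toReal_nonneg
  have hc₁ := toReal_negExp_le_one a
  have hβ : 0 ≤ b.toReal := toReal_nonneg
  have hexp₁ : Real.exp (-(t * b.toReal)) ≤ 1 := Real.exp_le_one_iff.mpr (by nlinarith)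
  have hexp₂ : 1 - t * b.toReal ≤ Real.exp (-(t * b.toReal)) := by
    linarith [Real.add_one_le_exp (-(t * b.toReal))]
  rw [slope_def_field, toReal_negExp_add_mul hb ht.le, toReal_negExp_add_mul hb le_rfl, sub_zero,
    zero_mul, neg_zero, Real.exp_zero, mul_one, abs_div, abs_of_pos ht,
    abs_of_nonpos (by nlinarith), div_le_iff₀ ht]
  nlinarith

theorem hasDerivWithinAt_integral_of_dominated_slope {Ω : Type*} [MeasurableSpace Ω]
    {μ : Measure Ω} {F : ℝ → Ω → ℝ} {F' : Ω → ℝ} {s : Set ℝ} {x₀ : ℝ} (bound : Ω → ℝ)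
    (hF_int : ∀ t, Integrable (F t) μ)
    (h_bound : ∀ᶠ t in 𝓝[s \ {x₀}] x₀, ∀ᵐ ω ∂μ, |slope (F · ω) x₀ t| ≤ bound ω)
    (bound_integrable : Integrable bound μ)
    (h_diff : ∀ᵐ ω ∂μ, HasDerivWithinAt (F · ω) (F' ω) s x₀) :
    HasDerivWithinAt (fun t => ∫ ω, F t ω ∂μ) (∫ ω, F' ω ∂μ) s x₀ := by
  rw [hasDerivWithinAt_iff_tendsto_slope]
  have h_slope : slope (fun t => ∫ ω, F t ω ∂μ) x₀ = fun t => ∫ ω, slope (F · ω) x₀ t ∂μ := by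
    funext t
    simp only [slope_def_field]
    rw [integral_div, integral_sub (hF_int t) (hF_int x₀)]
  rw [h_slope]
  refine tendsto_integral_filter_of_dominated_convergence bound
    (Eventually.of_forall fun t => ?_) h_bound bound_integrable ?_
  · simp_rw [slope_def_field]
    exact ((hF_int t).sub (hF_int x₀)).div_const _ |>.aestronglyMeasurable
  · filter_upwards [h_diff] with ω hω
    exact hasDerivWithinAt_iff_tendsto_slope.mp hω

theorem hasDerivWithinAt_lintegral_negExp_add_mul {Ω : Type*} [MeasurableSpace Ω]
    (P : Measure Ω) [IsFiniteMeasure P] {A B : Ω → ℝ≥0∞} (hA : Measurable A) (hB : Measurable B)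
    (hB_int : ∫⁻ ω, B ω ∂P ≠ ∞) :
    HasDerivWithinAt (fun t : ℝ => (∫⁻ ω, negExp (A ω + ENNReal.ofReal t * B ω) ∂P).toReal)
      (-(∫⁻ ω, B ω * negExp (A ω) ∂P).toReal) (Ici 0) 0 := by
  have hB_fin : ∀ᵐ ω ∂P, B ω < ∞ := ae_lt_top hB hB_int
  have hF_meas : ∀ t : ℝ, Measurable fun ω => negExp (A ω + ENNReal.ofReal t * B ω) :=
    fun t => measurable_negExp.comp (hA.add (hB.const_mul _))
  have hF_int : ∀ t : ℝ,
      Integrable (fun ω => (negExp (A ω + ENNReal.ofReal t * B ω)).toReal) P :=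
    fun t => (integrable_const 1).mono' (hF_meas t).ennreal_toReal.aestronglyMeasurable
      (ae_of_all _ fun ω => by
        simpa [abs_of_nonneg toReal_nonneg] using toReal_negExp_le_one _)
  have h_lhs : ∀ t : ℝ, (∫⁻ ω, negExp (A ω + ENNReal.ofReal t * B ω) ∂P).toReal
      = ∫ ω, (negExp (A ω + ENNReal.ofReal t * B ω)).toReal ∂P := fun t =>
    (integral_toReal (hF_meas t).aemeasurable
      (ae_of_all _ fun ω => (negExp_le_one _).trans_lt one_lt_top)).symm
  have h_rhs :
      (∫⁻ ω, B ω * negExp (A ω) ∂P).toReal = ∫ ω, (B ω * negExp (A ω)).toReal ∂P := by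
    refine (integral_toReal (hB.mul (measurable_negExp.comp hA)).aemeasurable ?_).symm
    filter_upwards [hB_fin] with ω hω
    exact mul_lt_top hω ((negExp_le_one _).trans_lt one_lt_top)
  simp only [h_lhs, h_rhs, ← integral_neg]
  refine hasDerivWithinAt_integral_of_dominated_slope (fun ω => (B ω).toReal) hF_int ?_
    (integrable_toReal_of_lintegral_ne_top hB.aemeasurable hB_int) ?_
  · refine eventually_nhdsWithin_of_forall fun t ht => ?_
    filter_upwards [hB_fin] with ω hω
    exact abs_slope_toReal_negExp_add_mul_le _ hω.ne (lt_of_le_of_ne ht.1 (Ne.symm ht.2))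
  · filter_upwards [hB_fin] with ω hω
    exact hasDerivWithinAt_toReal_negExp_add_mul _ hω.ne

theorem lintegral_le_of_monotone_superadditive {α : Type*} [MeasurableSpace α] {ν : Measure α}
    {G : (α → ℝ≥0∞) → ℝ≥0∞} (hG_mono : Monotone G)
    (hG_add : ∀ f g, Measurable f → Measurable g → G f + G g ≤ G (f + g))
    (hG_ind : ∀ (c : ℝ≥0∞) s, MeasurableSet s → c * ν s ≤ G (s.indicator fun _ => c))
    {f : α → ℝ≥0∞} (hf : Measurable f) : ∫⁻ x, f x ∂ν ≤ G f := by
  refine Measurable.ennreal_induction (motive := fun f => ∫⁻ x, f x ∂ν ≤ G f)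
    (fun c s hs => ?_) (fun f g _ hf hg hf_le hg_le => ?_) (fun f hf h_mono h_le => ?_) hf
  · rw [lintegral_indicator_const hs]
    exact hG_ind c s hs
  · exact (lintegral_add_left hf g).trans_le ((add_le_add hf_le hg_le).trans (hG_add f g hf hg))
  · rw [lintegral_iSup hf h_mono]
    exact iSup_le fun n => (h_le n).trans (hG_mono fun x => le_iSup (f · x) n)

theorem lintegral_mul_le_lintegral_of_setLIntegral_le {α : Type*} [MeasurableSpace α]
    {μ : Measure α} [SigmaFinite μ] {k : α → ℝ≥0∞}
    (hk : ∀ B, MeasurableSet B → ∫⁻ x in B, k x ∂μ ≤ μ B) {g : α → ℝ≥0∞} (hg : Measurable g) :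
    ∫⁻ x, g x * k x ∂μ ≤ ∫⁻ x, g x ∂μ := by
  -- `g * k` need not be measurable: pass to a measurable minorant with the same lower integral.
  obtain ⟨ψ, hψ, hψ_le, hψ_eq⟩ := exists_measurable_le_lintegral_eq μ fun x => g x * k x
  have h_ratio : (fun x => ψ x / g x) ≤ᵐ[μ] fun _ => 1 := by
    refine ae_le_of_forall_setLIntegral_le_of_sigmaFinite (hψ.div hg) fun B hB _ => ?_
    calc ∫⁻ x in B, ψ x / g x ∂μ
        ≤ ∫⁻ x in B, k x ∂μ :=
          lintegral_mono fun x => ENNReal.div_le_of_le_mul ((hψ_le x).trans_eq (mul_comm _ _))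
      _ ≤ μ B := hk B hB
      _ = ∫⁻ _ in B, 1 ∂μ := (setLIntegral_one B).symm
  rw [hψ_eq]
  refine lintegral_mono_ae ?_
  filter_upwards [h_ratio] with x hx
  simpa using (ENNReal.div_le_iff_le_mul (.inr one_ne_top) (.inr one_ne_zero)).mp hx

section Palm

variable {Ω 𝕏 : Type*} [MeasurableSpace Ω] [MeasurableSpace 𝕏] {P : Measure Ω}
  {Φ : Ω → Measure 𝕏} {M : Measure 𝕏} {K : 𝕏 → Measure (Measure 𝕏)}

def IsPalmKernel (P : Measure Ω) (Φ : Ω → Measure 𝕏) (M : Measure 𝕏)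
    (K : 𝕏 → Measure (Measure 𝕏)) : Prop :=
  ∀ B, MeasurableSet B → ∀ L : Set (Measure 𝕏), MeasurableSet L →
    ∫⁻ ω, Φ ω B * L.indicator (1 : Measure 𝕏 → ℝ≥0∞) (Φ ω) ∂P = ∫⁻ x in B, K x L ∂M

theorem lintegral_lintegral_eq_of_intensity (hΦ : Measurable Φ)
    (hM : ∀ B, MeasurableSet B → M B = ∫⁻ ω, Φ ω B ∂P) {g : 𝕏 → ℝ≥0∞} (hg : Measurable g) :
    ∫⁻ ω, ∫⁻ x, g x ∂(Φ ω) ∂P = ∫⁻ x, g x ∂M := by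
  have hM_bind : M = P.bind Φ :=
    Measure.ext fun B hB => by rw [hM B hB, Measure.bind_apply hB hΦ.aemeasurable]
  rw [hM_bind, Measure.lintegral_bind hΦ.aemeasurable hg.aemeasurable]

theorem lintegral_mul_indicator_le_palm (hK : IsPalmKernel P Φ M K) (hΦ : Measurable Φ)
    {L : Set (Measure 𝕏)} (hL : MeasurableSet L) {q : 𝕏 → ℝ≥0∞} (hq : Measurable q) :
    ∫⁻ ω, (∫⁻ x, q x ∂(Φ ω)) * L.indicator 1 (Φ ω) ∂P ≤ ∫⁻ x, q x * K x L ∂M := by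
  have h_restrict : ∀ r : Ω → ℝ≥0∞,
      ∫⁻ ω, r ω * L.indicator 1 (Φ ω) ∂P = ∫⁻ ω in Φ ⁻¹' L, r ω ∂P := fun r => by
    rw [← lintegral_indicator (hΦ hL)]
    congr 1 with ω
    by_cases hω : Φ ω ∈ L <;> simp [hω]
  rw [h_restrict, ← Measure.lintegral_bind hΦ.aemeasurable hq.aemeasurable]
  refine lintegral_le_of_monotone_superadditive (G := fun r => ∫⁻ x, r x * K x L ∂M)
    (fun q₁ q₂ h => lintegral_mono fun x => mul_le_mul_left (h x) _)
    (fun _ _ _ _ => (le_lintegral_add _ _).trans_eq (by simp [add_mul])) (fun c s hs => ?_) hq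
  calc c * (P.restrict (Φ ⁻¹' L)).bind Φ s = c * ∫⁻ x in s, K x L ∂M := by
        rw [Measure.bind_apply hs hΦ.aemeasurable, ← h_restrict, hK s hs L hL]
    _ ≤ ∫⁻ x in s, c * K x L ∂M := lintegral_const_mul_le _ _
    _ = ∫⁻ x, s.indicator (fun _ => c) x * K x L ∂M := by
        rw [← lintegral_indicator hs]
        congr 1 with x
        by_cases hx : x ∈ s <;> simp [hx]

theorem lintegral_mul_le_palm (hK : IsPalmKernel P Φ M K) (hΦ : Measurable Φ)
    {g : 𝕏 → ℝ≥0∞} (hg : Measurable g) {h : Measure 𝕏 → ℝ≥0∞} (hh : Measurable h) :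
    ∫⁻ ω, (∫⁻ x, g x ∂(Φ ω)) * h (Φ ω) ∂P ≤ ∫⁻ x, g x * ∫⁻ μ, h μ ∂(K x) ∂M := by
  set G : Ω → ℝ≥0∞ := fun ω => ∫⁻ x, g x ∂(Φ ω)
  have hG : Measurable G := (Measure.measurable_lintegral hg).comp hΦ
  have h_map : ∀ {r : Measure 𝕏 → ℝ≥0∞}, Measurable r →
      ∫⁻ ω, G ω * r (Φ ω) ∂P = ∫⁻ μ, r μ ∂((P.withDensity G).map Φ) := fun hr => by
    rw [lintegral_map hr hΦ]
    exact (lintegral_withDensity_eq_lintegral_mul P hG (hr.comp hΦ)).symm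
  rw [h_map hh]
  refine lintegral_le_of_monotone_superadditive (G := fun r => ∫⁻ x, g x * ∫⁻ μ, r μ ∂(K x) ∂M)
    (fun r₁ r₂ hr => lintegral_mono fun x => mul_le_mul_right (lintegral_mono fun μ => hr μ) _)
    (fun r₁ r₂ hr₁ _ => (le_lintegral_add _ _).trans_eq
      (lintegral_congr fun x => by rw [← mul_add, ← lintegral_add_left hr₁]; rfl))
    (fun c L hL => ?_) hh
  calc c * (P.withDensity G).map Φ L = c * ∫⁻ ω, G ω * L.indicator 1 (Φ ω) ∂P := by
        rw [h_map (measurable_one.indicator hL), lintegral_indicator_one hL]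
    _ ≤ c * ∫⁻ x, g x * K x L ∂M :=
        mul_le_mul_right (lintegral_mul_indicator_le_palm hK hΦ hL hg) c
    _ ≤ ∫⁻ x, c * (g x * K x L) ∂M := lintegral_const_mul_le _ _
    _ = ∫⁻ x, g x * ∫⁻ μ, L.indicator (fun _ => c) μ ∂(K x) ∂M :=
        lintegral_congr fun x => by rw [lintegral_indicator_const hL]; ring

theorem lintegral_mul_eq_palm [SigmaFinite M] (hK : IsPalmKernel P Φ M K) (hΦ : Measurable Φ)
    (hM : ∀ B, MeasurableSet B → M B = ∫⁻ ω, Φ ω B ∂P) {g : 𝕏 → ℝ≥0∞} (hg : Measurable g)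
    (hg_int : ∫⁻ x, g x ∂M ≠ ∞) {h : Measure 𝕏 → ℝ≥0∞} (hh : Measurable h)
    (hh_le : ∀ μ, h μ ≤ 1) :
    ∫⁻ ω, (∫⁻ x, g x ∂(Φ ω)) * h (Φ ω) ∂P = ∫⁻ x, g x * ∫⁻ μ, h μ ∂(K x) ∂M := by
  set h' : Measure 𝕏 → ℝ≥0∞ := fun μ => 1 - h μ
  have hh' : Measurable h' := measurable_const.sub hh
  have h_sum : ∀ μ, h μ + h' μ = 1 := fun μ => add_tsub_cancel_of_le (hh_le μ)
  have h_total : ∫⁻ ω, (∫⁻ x, g x ∂(Φ ω)) * h (Φ ω) ∂P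
      + ∫⁻ ω, (∫⁻ x, g x ∂(Φ ω)) * h' (Φ ω) ∂P = ∫⁻ x, g x ∂M := by
    have hGh : Measurable fun ω => (∫⁻ x, g x ∂(Φ ω)) * h (Φ ω) :=
      ((Measure.measurable_lintegral hg).comp hΦ).mul (hh.comp hΦ)
    rw [← lintegral_add_left hGh, ← lintegral_lintegral_eq_of_intensity hΦ hM hg]
    congr 1 with ω
    rw [← mul_add, h_sum, mul_one]
  have h_mass : ∀ B, MeasurableSet B → ∫⁻ x in B, K x univ ∂M ≤ M B := fun B hB => by
    rw [← hK B hB univ .univ, hM B hB]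
    simp
  have h_palm_total : ∫⁻ x, g x * ∫⁻ μ, h μ ∂(K x) ∂M + ∫⁻ x, g x * ∫⁻ μ, h' μ ∂(K x) ∂M
      ≤ ∫⁻ x, g x ∂M :=
    calc _ ≤ ∫⁻ x, g x * K x univ ∂M := (le_lintegral_add _ _).trans_eq
          (lintegral_congr fun x => by simp [← mul_add, ← lintegral_add_left hh, h_sum])
      _ ≤ ∫⁻ x, g x ∂M := lintegral_mul_le_lintegral_of_setLIntegral_le h_mass hg
  have h_fin : ∫⁻ ω, (∫⁻ x, g x ∂(Φ ω)) * h' (Φ ω) ∂P ≠ ∞ :=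
    ne_top_of_le_ne_top hg_int (h_total ▸ le_add_self)
  refine le_antisymm (lintegral_mul_le_palm hK hΦ hg hh)
    ((ENNReal.add_le_add_iff_right h_fin).mp ?_)
  calc _ ≤ ∫⁻ x, g x * ∫⁻ μ, h μ ∂(K x) ∂M + ∫⁻ x, g x * ∫⁻ μ, h' μ ∂(K x) ∂M :=
        add_le_add_right (lintegral_mul_le_palm hK hΦ hg hh') _
    _ ≤ ∫⁻ x, g x ∂M := h_palm_total
    _ = _ := h_total.symm

end Palm

theorem laplace_deriv_palm_general
    {Ω 𝕏 : Type*} [MeasurableSpace Ω] [MeasurableSpace 𝕏]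
    (P : Measure Ω) [IsProbabilityMeasure P]
    (Φ : Ω → Measure 𝕏) (hΦ : Measurable Φ)
    (M : Measure 𝕏) [SigmaFinite M]
    (hM : ∀ B, MeasurableSet B → M B = ∫⁻ ω, Φ ω B ∂P)
    (K : 𝕏 → Measure (Measure 𝕏))
    (hK : ∀ B, MeasurableSet B → ∀ L : Set (Measure 𝕏), MeasurableSet L →
      ∫⁻ ω, Φ ω B * L.indicator (1 : Measure 𝕏 → ℝ≥0∞) (Φ ω) ∂P
        = ∫⁻ x in B, K x L ∂M)
    (f g : 𝕏 → ℝ≥0∞) (hf : Measurable f) (hg : Measurable g)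
    (hgint : ∫⁻ x, g x ∂M ≠ ∞) :
    HasDerivWithinAt
      (fun t : ℝ =>
        (∫⁻ ω, negExp (∫⁻ x, (f x + ENNReal.ofReal t * g x) ∂(Φ ω)) ∂P).toReal)
      (-(∫⁻ x, g x * (∫⁻ μ, negExp (∫⁻ y, f y ∂μ) ∂(K x)) ∂M).toReal)
      (Set.Ici (0 : ℝ)) 0 := by
  have h_linear : ∀ (t : ℝ) (ω : Ω), ∫⁻ x, (f x + ENNReal.ofReal t * g x) ∂(Φ ω)
      = ∫⁻ x, f x ∂(Φ ω) + ENNReal.ofReal t * ∫⁻ x, g x ∂(Φ ω) := fun t ω => by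
    rw [lintegral_add_left hf, lintegral_const_mul _ hg]
  simp only [h_linear]
  rw [← lintegral_mul_eq_palm (h := fun μ => negExp (∫⁻ y, f y ∂μ)) hK hΦ hM hg hgint
    (measurable_negExp.comp (Measure.measurable_lintegral hf)) fun μ => negExp_le_one _]
  exact hasDerivWithinAt_lintegral_negExp_add_mul P ((Measure.measurable_lintegral hf).comp hΦ)
    ((Measure.measurable_lintegral hg).comp hΦ)
    (by rwa [lintegral_lintegral_eq_of_intensity hΦ hM hg])

/-- Characterization of the Palm kernel via the derivative of the
Laplace functional: `∂/∂t L_Φ(f + t g)|_{t=0} = −∫ g(x) L_{Φ_x}(f) M_Φ(dx)`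
(one-sided derivative at `t = 0`, since `f + tg ≥ 0` requires `t ≥ 0`). -/
theorem laplace_deriv_palm
    {Ω 𝕏 : Type*} [MeasurableSpace Ω] [MetricSpace 𝕏] [CompleteSpace 𝕏]
    [TopologicalSpace.SeparableSpace 𝕏] [MeasurableSpace 𝕏] [BorelSpace 𝕏]
    (P : Measure Ω) [IsProbabilityMeasure P]
    (Φ : Ω → Measure 𝕏) (hΦ : Measurable Φ)
    (M : Measure 𝕏) [SigmaFinite M]
    (hM : ∀ B, MeasurableSet B → M B = ∫⁻ ω, Φ ω B ∂P)
    (K : 𝕏 → Measure (Measure 𝕏))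
    (hK : ∀ B, MeasurableSet B → ∀ L : Set (Measure 𝕏), MeasurableSet L →
      ∫⁻ ω, Φ ω B * L.indicator (1 : Measure 𝕏 → ℝ≥0∞) (Φ ω) ∂P
        = ∫⁻ x in B, K x L ∂M)
    (f g : 𝕏 → ℝ≥0∞) (hf : Measurable f) (hg : Measurable g)
    (hgint : ∫⁻ x, g x ∂M ≠ ∞) :
    HasDerivWithinAt
      (fun t : ℝ =>
        (∫⁻ ω, negExp (∫⁻ x, (f x + ENNReal.ofReal t * g x) ∂(Φ ω)) ∂P).toReal)
      (-(∫⁻ x, g x * (∫⁻ μ, negExp (∫⁻ y, f y ∂μ) ∂(K x)) ∂M).toReal)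
      (Set.Ici (0 : ℝ)) 0 :=
  laplace_deriv_palm_general P Φ hΦ M hM K hK f g hf hg hgint
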